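/- arXiv:2111.08641 — 3 statements merged into one kernel-verified Lean document; each statement's English description precedes it below -/
import Mathlib

section
/- Let S(n) = Σ_{k=0}^{n} binom(n,k)^2 · binom(n−k, k). Then for every nonnegative integer n, S(n) mod 5 lies in {0, 1, 4}; that is, S(n) ≡ 0, 1, or −1 (mod 5). -/
/-- `S(n) = Σ_{k=0}^n binom(n,k)^2 binom(n-k,k)`. -/
def Sseq (n : ℕ) : ℕ :=
  ∑ k ∈ Finset.range (n + 1), n.choose k ^ 2 * (n - k).choose k

/-!
Lucas's theorem makes each summand multiplicative in base-`p` digits, which gives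
`S(p a + b) ≡ S(a) S(b) (mod p)` for every prime `p` and digit `b < p`. Modulo 5 the digit values
are `S(0), …, S(4) ≡ 1, 1, 0, -1, 0`, all roots of `x³ = x`, and the roots of `x³ = x` are closed
under multiplication; in `ZMod 5` they are exactly `0, 1, -1`.
-/

open Finset

theorem Finset.sum_range_mul_eq_sum_sum {M : Type*} [AddCommMonoid M] (f : ℕ → M) (p m : ℕ) :
    ∑ k ∈ range (p * m), f k = ∑ i ∈ range m, ∑ j ∈ range p, f (p * i + j) := by
  induction m with
  | zero => simp
  | succ m ih => rw [Nat.mul_succ, sum_range_add, ih, sum_range_succ]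

theorem Nat.cast_choose_mul_add {p : ℕ} [Fact p.Prime] {b j : ℕ} (hb : b < p) (hj : j < p)
    (a i : ℕ) : ((p * a + b).choose (p * i + j) : ZMod p) = b.choose j * a.choose i := by
  have hp := (Fact.out : p.Prime).pos
  have h := (ZMod.natCast_eq_natCast_iff _ _ _).mpr
    (Choose.choose_modEq_choose_mod_mul_choose_div_nat (n := p * a + b) (k := p * i + j) (p := p))
  rw [h]
  simp [Nat.mul_add_div hp, Nat.mod_eq_of_lt hb, Nat.mod_eq_of_lt hj,
    Nat.div_eq_of_lt hb, Nat.div_eq_of_lt hj]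

namespace Sseq

def term (n k : ℕ) : ℕ := n.choose k ^ 2 * (n - k).choose k

theorem eq_sum_range_term {n N : ℕ} (h : n < N) : Sseq n = ∑ k ∈ range N, term n k := by
  refine sum_subset (range_subset_range.mpr h) fun k _ hk => ?_
  simp [Nat.choose_eq_zero_of_lt (not_lt.mp (mem_range.not.mp hk))]

theorem cast_term_mul_add {p : ℕ} [Fact p.Prime] {b j : ℕ} (hb : b < p) (hj : j < p) (a i : ℕ) :
    (term (p * a + b) (p * i + j) : ZMod p) = term a i * term b j := by
  by_cases hle : j ≤ b ∧ i ≤ a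
  · have hsub : p * a + b - (p * i + j) = p * (a - i) + (b - j) := by
      obtain ⟨hjb, hia⟩ := hle
      have : p * i ≤ p * a := Nat.mul_le_mul_left p hia
      rw [Nat.mul_sub]
      omega
    simp only [term, Nat.cast_mul, Nat.cast_pow, hsub, Nat.cast_choose_mul_add hb hj,
      Nat.cast_choose_mul_add (Nat.sub_lt_of_lt hb) hj]
    ring
  · have hzero : b.choose j = 0 ∨ a.choose i = 0 := by
      rcases not_and_or.mp hle with h | h
      exacts [.inl (Nat.choose_eq_zero_of_lt (not_le.mp h)),
        .inr (Nat.choose_eq_zero_of_lt (not_le.mp h))]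
    simp only [term, Nat.cast_mul, Nat.cast_pow, Nat.cast_choose_mul_add hb hj]
    rcases hzero with h | h <;> simp [h]

theorem cast_mul_add {p : ℕ} [Fact p.Prime] {b : ℕ} (hb : b < p) (a : ℕ) :
    (Sseq (p * a + b) : ZMod p) = Sseq a * Sseq b := by
  have hp := (Fact.out : p.Prime).pos
  rw [eq_sum_range_term (show p * a + b < p * (a + 1) by rw [Nat.mul_succ]; omega),
    eq_sum_range_term (Nat.lt_succ_self a), eq_sum_range_term hb, sum_range_mul_eq_sum_sum]
  push_cast
  rw [sum_mul_sum]
  refine sum_congr rfl fun i _ => sum_congr rfl fun j hj => ?_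
  exact cast_term_mul_add hb (mem_range.mp hj) a i

theorem cast_pow_three (n : ℕ) : (Sseq n : ZMod 5) ^ 3 = Sseq n := by
  have hdigit : ∀ b < 5, (Sseq b : ZMod 5) ^ 3 = Sseq b := by decide
  induction n using Nat.strong_induction_on with
  | _ n ih =>
    rcases Nat.eq_zero_or_pos n with rfl | hn
    · decide
    have : Fact (Nat.Prime 5) := ⟨Nat.prime_five⟩
    rw [← Nat.div_add_mod n 5, cast_mul_add (Nat.mod_lt n (by norm_num)), mul_pow,
      ih _ (Nat.div_lt_self hn (by norm_num)), hdigit _ (Nat.mod_lt n (by norm_num))]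

end Sseq

theorem Sseq_mod_five (n : ℕ) : Sseq n % 5 = 0 ∨ Sseq n % 5 = 1 ∨ Sseq n % 5 = 4 := by
  have h := Sseq.cast_pow_three n
  rw [← ZMod.val_natCast]
  generalize (Sseq n : ZMod 5) = x at h ⊢
  revert x
  decide
end

section
/- Let p be an odd prime and a, b, c integers with p ∤ c. Then the coefficient of x^{-1} in (a x^{-1} + b + c x)^{p−1} (equivalently, the constant term of (a x^{-1}+b+cx)^{p−1}·x, which equals (T(p) − b·T(p−1))/(2c) where T(n) = Σ_{k=0}^{⌊n/2⌋} binom(n,2k)binom(2k,k)(ac)^k b^{n−2k}) satisfies 2c · ct[(a x^{-1}+b+cx)^{p−1} x] ≡ b·(1 − ((b²−4ac)/p)) (mod p). -/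
/-- The generalized central trinomial numbers `T_{a,b,c}(n)`. -/
def genTrinomial (a b c : ℤ) (n : ℕ) : ℤ :=
  ∑ k ∈ Finset.range (n / 2 + 1),
    (n.choose (2 * k) : ℤ) * ((2 * k).choose k : ℤ) * (a * c) ^ k * b ^ (n - 2 * k)

/-!
Modulo `p`, every term of `T(p)` with `k > 0` carries a factor `C(p, 2k) ≡ 0`, so `T(p) ≡ b^p ≡ b`.
In `T(p - 1)` one has `C(p - 1, 2k) ≡ 1` and `C(2k, k) ≡ (-4)^k C((p - 1)/2, k)`, so by the binomial
theorem `T(p - 1) ≡ (b² - 4ac)^((p - 1)/2)`, which is the Legendre symbol by Euler's criterion.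
-/

open Finset

namespace ZMod

theorem natCast_eq_neg_of_add_eq {p n k : ℕ} (h : n + k = p) : (n : ZMod p) = -k := by
  rw [eq_neg_iff_add_eq_zero, ← Nat.cast_add, h, natCast_self]

variable {p : ℕ} [Fact p.Prime]

theorem natCast_ne_zero_of_pos_of_lt {j : ℕ} (h0 : 0 < j) (hjp : j < p) : (j : ZMod p) ≠ 0 :=
  (natCast_eq_zero_iff j p).not.mpr (Nat.not_dvd_of_pos_of_lt h0 hjp)

theorem natCast_choose_sub_one {j : ℕ} (hj : j < p) :
    ((p - 1).choose j : ZMod p) = (-1) ^ j := by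
  induction j with
  | zero => simp
  | succ j ih =>
    have hrec := congrArg (Nat.cast : ℕ → ZMod p) (Nat.choose_succ_right_eq (p - 1) j)
    have hneg : ((p - 1 - j : ℕ) : ZMod p) = -(j + 1) := by
      rw [natCast_eq_neg_of_add_eq (k := j + 1) (by omega)]; push_cast; rfl
    push_cast at hrec
    rw [hneg, ih (by omega)] at hrec
    apply mul_right_cancel₀ (natCast_ne_zero_of_pos_of_lt j.succ_pos hj)
    push_cast
    linear_combination hrec

/-- Since `p / 2 ≡ -1/2 (mod p)`, this is the identity `C(2k, k) = (-4)^k C(-1/2, k)`. -/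
theorem natCast_centralBinom {k : ℕ} (hodd : Odd p) (hk : k ≤ p / 2) :
    (k.centralBinom : ZMod p) = (-4) ^ k * (p / 2).choose k := by
  have hp := Nat.two_mul_div_two_add_one_of_odd hodd
  induction k with
  | zero => simp
  | succ k ih =>
    have hcb := congrArg (Nat.cast : ℕ → ZMod p) (Nat.succ_mul_centralBinom_succ k)
    have hrec := congrArg (Nat.cast : ℕ → ZMod p) (Nat.choose_succ_right_eq (p / 2) k)
    have hneg : (2 * (p / 2 - k) : ℕ) = -(2 * k + 1 : ZMod p) := by
      rw [natCast_eq_neg_of_add_eq (k := 2 * k + 1) (by omega)]; push_cast; rfl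
    push_cast at hcb hrec hneg
    rw [ih (by omega)] at hcb
    apply mul_left_cancel₀ (natCast_ne_zero_of_pos_of_lt k.succ_pos (by omega : k + 1 < p))
    push_cast
    linear_combination hcb - (-4) ^ (k + 1) * hrec + 2 * (-4) ^ k * ((p / 2).choose k) * hneg

end ZMod

section genTrinomial

variable {p : ℕ} [Fact p.Prime] (a b c : ℤ)

theorem genTrinomial_prime_cast (hodd : Odd p) : (genTrinomial a b c p : ZMod p) = b := by
  have hp := Nat.two_mul_div_two_add_one_of_odd hodd
  rw [genTrinomial, Int.cast_sum, sum_eq_single_of_mem 0 (by simp)]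
  · simp [ZMod.pow_card]
  · intro k hk hk0
    have hdvd : ((p.choose (2 * k) : ℕ) : ZMod p) = 0 :=
      (ZMod.natCast_eq_zero_iff _ _).mpr
        (Nat.Prime.dvd_choose_self Fact.out (by omega) (by rw [mem_range] at hk; omega))
    push_cast
    simp [hdvd]

theorem genTrinomial_sub_one_cast (hodd : Odd p) :
    (genTrinomial a b c (p - 1) : ZMod p) = ((b ^ 2 - 4 * a * c : ℤ) : ZMod p) ^ (p / 2) := by
  have hp := Nat.two_mul_div_two_add_one_of_odd hodd
  have hhalf : (p - 1) / 2 = p / 2 := by omega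
  rw [genTrinomial, hhalf, Int.cast_sum,
    show ((b ^ 2 - 4 * a * c : ℤ) : ZMod p) = -(4 * (a * c)) + b ^ 2 by push_cast; ring, add_pow]
  refine sum_congr rfl fun k hk => ?_
  have hk : k ≤ p / 2 := by rw [mem_range] at hk; omega
  have hb : (b : ZMod p) ^ (p - 1 - 2 * k) = ((b : ZMod p) ^ 2) ^ (p / 2 - k) := by
    rw [← pow_mul]; congr 1; omega
  push_cast
  rw [ZMod.natCast_choose_sub_one (by omega), ← Nat.centralBinom_eq_two_mul_choose,
    ZMod.natCast_centralBinom hodd hk, hb, pow_mul]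
  ring

end genTrinomial

theorem gen_trinomial_pm1_x_general (p : ℕ) [Fact p.Prime] (hodd : Odd p) (a b c : ℤ) :
    genTrinomial a b c p - b * genTrinomial a b c (p - 1) ≡
      b * (1 - legendreSym p (b ^ 2 - 4 * a * c)) [ZMOD p] := by
  rw [← ZMod.intCast_eq_intCast_iff]
  push_cast
  rw [genTrinomial_prime_cast a b c hodd, genTrinomial_sub_one_cast a b c hodd, legendreSym.eq_pow]
  ring

theorem gen_trinomial_pm1_x (p : ℕ) [Fact p.Prime] (hodd : Odd p) (a b c : ℤ)
    (hc : ¬ ((p : ℤ) ∣ c)) :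
    genTrinomial a b c p - b * genTrinomial a b c (p - 1) ≡
      b * (1 - legendreSym p (b ^ 2 - 4 * a * c)) [ZMOD p] :=
  gen_trinomial_pm1_x_general p hodd a b c
end

section
/- Let C(n) = binom(2n,n)/(n+1) denote the Catalan numbers. Then for every prime p and every n ≥ 0, C(pn + (p−1)) ≡ −(2n+1)·C(n) (mod p). -/
/-!
Write `C(m) = binom(2m, m) - binom(2m, m + 1)` with `m = pn + (p - 1)`. In base `p` the last
digits of `2m`, `m` and `m + 1` are `p - 2`, `p - 1` and `0`, with the remaining parts `2n + 1`,
`n` and `n + 1`. By Lucas's theorem `binom(2m, m) ≡ binom(p - 2, p - 1) binom(2n + 1, n) = 0` and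
`binom(2m, m + 1) ≡ binom(2n + 1, n + 1) = (2n + 1) C(n)` modulo `p`.
-/

open Nat

theorem Choose.choose_mul_add_mul_add_modEq {p : ℕ} [Fact p.Prime] {a b r s : ℕ}
    (hr : r < p) (hs : s < p) :
    choose (p * a + r) (p * b + s) ≡ choose r s * choose a b [ZMOD p] := by
  have hp : 0 < p := Nat.pos_of_neZero p
  simpa [Nat.mul_add_mod, Nat.mul_add_div hp, Nat.mod_eq_of_lt, Nat.div_eq_of_lt, hr, hs] using
    Choose.choose_modEq_choose_mod_mul_choose_div (p := p) (n := p * a + r) (k := p * b + s)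

theorem catalan_eq_choose_sub_choose (n : ℕ) :
    (catalan n : ℤ) = choose (2 * n) n - choose (2 * n) (n + 1) := by
  have hcat : ((n + 1) * catalan n : ℤ) = choose (2 * n) n := by
    exact_mod_cast succ_mul_catalan_eq_centralBinom n
  have hsucc : (choose (2 * n) (n + 1) * (n + 1) : ℤ) = choose (2 * n) n * n := by
    have := Nat.choose_succ_right_eq (2 * n) n
    rw [show 2 * n - n = n by omega] at this
    exact_mod_cast this
  have hn : (n + 1 : ℤ) ≠ 0 := by positivity
  apply mul_left_cancel₀ hn
  linear_combination hcat + hsucc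

theorem two_mul_add_one_mul_catalan (n : ℕ) :
    (2 * n + 1) * catalan n = choose (2 * n + 1) (n + 1) := by
  apply Nat.eq_of_mul_eq_mul_right n.succ_pos
  calc (2 * n + 1) * catalan n * (n + 1) = (2 * n + 1) * ((n + 1) * catalan n) := by ring
    _ = choose (2 * n + 1) (n + 1) * (n + 1) := by
      rw [succ_mul_catalan_eq_centralBinom, centralBinom, Nat.add_one_mul_choose_eq]

theorem catalan_lucas_top (p : ℕ) (hp : p.Prime) (n : ℕ) :
    (catalan (p * n + (p - 1)) : ℤ) ≡ -(2 * n + 1) * (catalan n : ℤ) [ZMOD p] := by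
  have := Fact.mk hp
  have hp2 := hp.two_le
  set m := p * n + (p - 1)
  have h2m : 2 * m = p * (2 * n + 1) + (p - 2) := by grind
  have central : (choose (2 * m) m : ℤ) ≡ 0 [ZMOD p] := by
    have h := Choose.choose_mul_add_mul_add_modEq (p := p) (a := 2 * n + 1) (b := n)
      (show p - 2 < p by omega) (show p - 1 < p by omega)
    rwa [choose_eq_zero_of_lt (by omega : p - 2 < p - 1), ← h2m, cast_zero, zero_mul] at h
  have shifted : (choose (2 * m) (m + 1) : ℤ) ≡ choose (2 * n + 1) (n + 1) [ZMOD p] := by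
    have h := Choose.choose_mul_add_mul_add_modEq (p := p) (a := 2 * n + 1) (b := n + 1)
      (show p - 2 < p by omega) (show 0 < p by omega)
    rwa [choose_zero_right, cast_one, one_mul, ← h2m, mul_add_one, add_zero,
      show p * n + p = m + 1 by omega] at h
  calc (catalan m : ℤ) ≡ 0 - choose (2 * n + 1) (n + 1) [ZMOD p] := by
        rw [catalan_eq_choose_sub_choose]; exact central.sub shifted
    _ = -(2 * n + 1) * (catalan n : ℤ) := by
        rw [← two_mul_add_one_mul_catalan]; push_cast; ring
end
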